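/- arXiv:1910.08237 — 4 statements merged into one kernel-verified Lean document; each statement's English description precedes it below -/
import Mathlib

section
/- Let β > 0, η > 0, g ∈ ℝ, and w_k ∈ (−1,1). Set A := (1+w_k)/(1−w_k) and w* := (A·exp(−2βηg) − 1)/(A·exp(−2βηg) + 1). Then w* ∈ (−1,1) and w* is the unique minimizer over the open interval (−1,1) of the function w ↦ η·g·w + D_{Φ_β}(w, w_k); that is, the proximal mirror-descent update for the tanh mirror map has the stated closed form. -/
/-- For positive `a, b` with `a ≠ b`, we have `a - b < a * (log a - log b)`. -/
lemma aux_log (a b : ℝ) (ha : 0 < a) (hb : 0 < b) (hab : a ≠ b) :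
    a - b < a * (Real.log a - Real.log b) := by
  have h1 : 0 < b / a := div_pos hb ha
  have h2 : b / a ≠ 1 := by
    intro h
    exact hab ((div_eq_one_iff_eq (ne_of_gt ha)).mp h).symm
  have h3 := Real.log_lt_sub_one_of_pos h1 h2
  rw [Real.log_div (ne_of_gt hb) (ne_of_gt ha)] at h3
  have h4 := mul_lt_mul_of_pos_left h3 ha
  have hba : a * (b / a) = b := by field_simp
  nlinarith

/-- closed form of the proximal mirror-descent update for the tanh
mirror map. With `A = (1+wk)/(1-wk)` and
`w* = (A·exp(-2βηg) - 1)/(A·exp(-2βηg) + 1)`, the point `w*` lies in `(-1,1)`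
and is the unique minimizer over `(-1,1)` of `w ↦ η·g·w + D_{Φ_β}(w, wk)`. -/
theorem stmt_6 (β η g wk : ℝ) (hβ : 0 < β) (hη : 0 < η)
    (hwk : wk ∈ Set.Ioo (-1 : ℝ) 1)
    (Φ Φ' : ℝ → ℝ)
    (hΦ : ∀ x, Φ x = (1 / (2 * β)) *
      ((1 + x) * Real.log (1 + x) + (1 - x) * Real.log (1 - x)))
    (hΦ' : ∀ x, Φ' x = (1 / (2 * β)) * Real.log ((1 + x) / (1 - x)))
    (D : ℝ → ℝ → ℝ) (hD : ∀ p q, D p q = Φ p - Φ q - Φ' q * (p - q))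
    (A wstar : ℝ) (hA : A = (1 + wk) / (1 - wk))
    (hwstar : wstar = (A * Real.exp (-(2 * β * η * g)) - 1) /
      (A * Real.exp (-(2 * β * η * g)) + 1)) :
    wstar ∈ Set.Ioo (-1 : ℝ) 1 ∧
      ∀ w ∈ Set.Ioo (-1 : ℝ) 1, w ≠ wstar →
        η * g * wstar + D wstar wk < η * g * w + D w wk := by
  obtain ⟨hwk1, hwk2⟩ := hwk
  have h1k : 0 < 1 + wk := by linarith
  have h2k : 0 < 1 - wk := by linarith
  have hA0 : 0 < A := by rw [hA]; positivity
  set E := A * Real.exp (-(2 * β * η * g)) with hE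
  have hE0 : 0 < E := by positivity
  have hE1 : 0 < E + 1 := by linarith
  have h1s : 1 + wstar = 2 * E / (E + 1) := by
    rw [hwstar]; field_simp; ring
  have h2s : 1 - wstar = 2 / (E + 1) := by
    rw [hwstar]; field_simp; ring
  have hs1 : 0 < 1 + wstar := by rw [h1s]; positivity
  have hs2 : 0 < 1 - wstar := by rw [h2s]; positivity
  have hmem : wstar ∈ Set.Ioo (-1 : ℝ) 1 := ⟨by linarith, by linarith⟩
  have hratio : (1 + wstar) / (1 - wstar) = E := by
    rw [h1s, h2s]; field_simp
  have klog : Real.log (1 + wstar) - Real.log (1 - wstar) =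
      Real.log (1 + wk) - Real.log (1 - wk) - 2 * β * η * g := by
    rw [← Real.log_div (ne_of_gt hs1) (ne_of_gt hs2), hratio, hE,
      Real.log_mul (ne_of_gt hA0) (Real.exp_ne_zero _), Real.log_exp, hA,
      Real.log_div (ne_of_gt h1k) (ne_of_gt h2k)]
    ring
  refine ⟨hmem, ?_⟩
  intro w hw hne
  obtain ⟨hw1, hw2⟩ := hw
  have h1w : 0 < 1 + w := by linarith
  have h2w : 0 < 1 - w := by linarith
  have p1 := aux_log (1 + w) (1 + wstar) h1w hs1 (by intro h; apply hne; linarith)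
  have p2 := aux_log (1 - w) (1 - wstar) h2w hs2 (by intro h; apply hne; linarith)
  have hpos : 0 < (1 + w) * (Real.log (1 + w) - Real.log (1 + wstar)) +
      (1 - w) * (Real.log (1 - w) - Real.log (1 - wstar)) := by linarith
  have hid : η * g * w + D w wk - (η * g * wstar + D wstar wk) =
      (1 / (2 * β)) * ((1 + w) * (Real.log (1 + w) - Real.log (1 + wstar)) +
        (1 - w) * (Real.log (1 - w) - Real.log (1 - wstar))) := by
    simp only [hD, hΦ, hΦ']
    rw [Real.log_div (ne_of_gt h1k) (ne_of_gt h2k)]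
    have hβ' : (2 : ℝ) * β ≠ 0 := by positivity
    field_simp
    linear_combination (w - wstar) * klog
  have hc : 0 < (1 / (2 * β)) * ((1 + w) * (Real.log (1 + w) - Real.log (1 + wstar)) +
      (1 - w) * (Real.log (1 - w) - Real.log (1 - wstar))) := by positivity
  linarith
end

section
/- Let a < b be real numbers, let P : ℝ → (a,b) be a strictly monotonically increasing continuous bijection from ℝ onto (a,b), and let Φ(x) = ∫_{x₀}^{x} P⁻¹(y) dy for a fixed x₀ ∈ (a,b). Then for every x_k ∈ (a,b), η > 0, and g ∈ ℝ, the point x_{k+1} := P( P⁻¹(x_k) − η·g ) lies in (a,b) and is the unique minimizer over (a,b) of the function w ↦ η·g·w + D_Φ(w, x_k). In other words, gradient descent on the auxiliary (dual) variable x̃ = P⁻¹(x) followed by re-projection through P implements exactly the proximal mirror-descent update with mirror map Φ. -/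
open MeasureTheory intervalIntegral

/-- For a strictly monotonically increasing continuous bijection
`P : ℝ → (a,b)` with mirror map `Φ x = ∫ y in x₀..x, P⁻¹ y` (so `Φ' = P⁻¹`),
the point `x' = P (P⁻¹ xk - η·g)` lies in `(a,b)` and is the unique minimizer
over `(a,b)` of `w ↦ η·g·w + D_Φ(w, xk)`: gradient descent on the dual
(auxiliary) variable followed by re-projection through `P` implements exactly
the proximal mirror-descent update. -/
theorem stmt_7 (a b : ℝ) (hab : a < b) (P Pinv : ℝ → ℝ)
    (hmono : StrictMono P) (hcont : Continuous P)
    (hrange : Set.range P = Set.Ioo a b)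
    (hinv : ∀ x : ℝ, Pinv (P x) = x)
    (x₀ : ℝ) (hx₀ : x₀ ∈ Set.Ioo a b)
    (Φ : ℝ → ℝ) (hΦ : ∀ x, Φ x = ∫ y in x₀..x, Pinv y)
    (D : ℝ → ℝ → ℝ) (hD : ∀ p q, D p q = Φ p - Φ q - Pinv q * (p - q))
    (xk : ℝ) (hxk : xk ∈ Set.Ioo a b) (η g : ℝ) (hη : 0 < η)
    (xnext : ℝ) (hxnext : xnext = P (Pinv xk - η * g)) :
    xnext ∈ Set.Ioo a b ∧
      ∀ w ∈ Set.Ioo a b, w ≠ xnext →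
        η * g * xnext + D xnext xk < η * g * w + D w xk := by
  -- basic facts
  have hmemP : ∀ x : ℝ, P x ∈ Set.Ioo a b := by
    intro x; rw [← hrange]; exact ⟨x, rfl⟩
  have hsurj : ∀ y ∈ Set.Ioo a b, ∃ x, P x = y := by
    intro y hy; rw [← hrange] at hy; exact hy
  have hxnextmem : xnext ∈ Set.Ioo a b := hxnext ▸ hmemP _
  -- Pinv strictly monotone on Ioo a b
  have hPinvMono : StrictMonoOn Pinv (Set.Ioo a b) := by
    intro u hu v hv huv
    obtain ⟨x, hx⟩ := hsurj u hu
    obtain ⟨y, hy⟩ := hsurj v hv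
    rw [← hx, ← hy, hinv, hinv]
    rw [← hx, ← hy] at huv
    exact hmono.lt_iff_lt.mp huv
  have hPinvMonoOn : MonotoneOn Pinv (Set.Ioo a b) := hPinvMono.monotoneOn
  -- integrability between points of Ioo a b
  have hInt : ∀ c d : ℝ, c ∈ Set.Ioo a b → d ∈ Set.Ioo a b →
      IntervalIntegrable Pinv volume c d := by
    intro c d hc hd
    have hsub : Set.uIcc c d ⊆ Set.Ioo a b := Set.ordConnected_Ioo.uIcc_subset hc hd
    exact (hPinvMonoOn.mono hsub).intervalIntegrable
  -- key strict inequality: for c w ∈ Ioo a b, c ≠ w, ∫_c^w Pinv > Pinv c * (w - c)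
  have hkey : ∀ c w : ℝ, c ∈ Set.Ioo a b → w ∈ Set.Ioo a b → w ≠ c →
      Pinv c * (w - c) < ∫ y in c..w, Pinv y := by
    intro c w hc hw hne
    rcases lt_or_gt_of_ne hne with hlt | hgt
    · -- w < c : ∫_c^w = -∫_w^c, show ∫_w^c < Pinv c * (c - w)
      set m := (w + c) / 2 with hm
      have hwm : w < m := by simp [hm]; linarith
      have hmc : m < c := by simp [hm]; linarith
      have hmmem : m ∈ Set.Ioo a b := ⟨lt_trans hw.1 hwm, lt_trans hmc hc.2⟩
      have h1 : (∫ y in w..m, Pinv y) ≤ ∫ y in w..m, Pinv m := by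
        apply intervalIntegral.integral_mono_on hwm.le (hInt w m hw hmmem)
          intervalIntegrable_const
        intro y hy
        have hymem : y ∈ Set.Ioo a b := ⟨lt_of_lt_of_le hw.1 hy.1, lt_of_le_of_lt hy.2 hmmem.2⟩
        exact hPinvMonoOn hymem hmmem hy.2
      have h2 : (∫ y in m..c, Pinv y) ≤ ∫ y in m..c, Pinv c := by
        apply intervalIntegral.integral_mono_on hmc.le (hInt m c hmmem hc)
          intervalIntegrable_const
        intro y hy
        have hymem : y ∈ Set.Ioo a b := ⟨lt_of_lt_of_le hmmem.1 hy.1, lt_of_le_of_lt hy.2 hc.2⟩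
        exact hPinvMonoOn hymem hc hy.2
      have hsplit : (∫ y in w..m, Pinv y) + (∫ y in m..c, Pinv y) = ∫ y in w..c, Pinv y :=
        intervalIntegral.integral_add_adjacent_intervals (hInt w m hw hmmem) (hInt m c hmmem hc)
      have hflip : (∫ y in c..w, Pinv y) = -∫ y in w..c, Pinv y :=
        intervalIntegral.integral_symm w c
      have hPm : Pinv m < Pinv c := hPinvMono hmmem hc hmc
      simp only [intervalIntegral.integral_const, smul_eq_mul] at h1 h2
      nlinarith [hwm, hmc]
    · -- c < w
      set m := (c + w) / 2 with hm
      have hcm : c < m := by simp [hm]; linarith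
      have hmw : m < w := by simp [hm]; linarith
      have hmmem : m ∈ Set.Ioo a b := ⟨lt_trans hc.1 hcm, lt_trans hmw hw.2⟩
      have h1 : (∫ y in c..m, Pinv c) ≤ ∫ y in c..m, Pinv y := by
        apply intervalIntegral.integral_mono_on hcm.le intervalIntegrable_const
          (hInt c m hc hmmem)
        intro y hy
        have hymem : y ∈ Set.Ioo a b := ⟨lt_of_lt_of_le hc.1 hy.1, lt_of_le_of_lt hy.2 hmmem.2⟩
        exact hPinvMonoOn hc hymem hy.1
      have h2 : (∫ y in m..w, Pinv m) ≤ ∫ y in m..w, Pinv y := by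
        apply intervalIntegral.integral_mono_on hmw.le intervalIntegrable_const
          (hInt m w hmmem hw)
        intro y hy
        have hymem : y ∈ Set.Ioo a b := ⟨lt_of_lt_of_le hmmem.1 hy.1, lt_of_le_of_lt hy.2 hw.2⟩
        exact hPinvMonoOn hmmem hymem hy.1
      have hsplit : (∫ y in c..m, Pinv y) + (∫ y in m..w, Pinv y) = ∫ y in c..w, Pinv y :=
        intervalIntegral.integral_add_adjacent_intervals (hInt c m hc hmmem) (hInt m w hmmem hw)
      have hPm : Pinv c < Pinv m := hPinvMono hc hmmem hcm
      simp only [intervalIntegral.integral_const, smul_eq_mul] at h1 h2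
      nlinarith [hcm, hmw]
  refine ⟨hxnextmem, ?_⟩
  intro w hw hwne
  -- Φ w - Φ xnext = ∫_xnext^w Pinv
  have hΦdiff : Φ w - Φ xnext = ∫ y in xnext..w, Pinv y := by
    rw [hΦ, hΦ]
    rw [← intervalIntegral.integral_add_adjacent_intervals
      (hInt x₀ xnext hx₀ hxnextmem) (hInt xnext w hxnextmem hw)]
    ring
  have hPc : Pinv xnext = Pinv xk - η * g := by rw [hxnext, hinv]
  have hI := hkey xnext w hxnextmem hw hwne
  rw [hPc] at hI
  rw [hD, hD]
  nlinarith [hI, hΦdiff]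
end

section
/- Let E be a real inner product space, C ⊆ E a convex open set, Φ : E → ℝ convex on C and differentiable on C with gradient ∇Φ, K ⊆ C a convex set, and y ∈ C. If x* ∈ K minimizes the function x ↦ D_Φ(x, y) over K, then for every x ∈ K the generalized Pythagorean inequality holds: D_Φ(x, x*) + D_Φ(x*, y) ≤ D_Φ(x, y). -/
open scoped RealInnerProductSpace

/-!
Writing `D(x, y) = D(x, x*) + D(x*, y) + ⟪∇Φ(x*) - ∇Φ(y), x - x*⟫` (the three-point identity), it suffices
that the last term is nonnegative, and that is the first-order optimality condition for `x*`:
the derivative of `D(·, y)` at `x*` is `⟪∇Φ(x*) - ∇Φ(y), ·⟫`, and it is nonnegative along every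
direction `x - x*` pointing into the convex set `K`.
-/

section Bregman

variable {E : Type*} [NormedAddCommGroup E] [InnerProductSpace ℝ E]

def bregmanDiv (Φ : E → ℝ) (gradΦ : E → E) (p q : E) : ℝ :=
  Φ p - Φ q - ⟪gradΦ q, p - q⟫

theorem bregmanDiv_three_point (Φ : E → ℝ) (gradΦ : E → E) (x z y : E) :
    bregmanDiv Φ gradΦ x y =
      bregmanDiv Φ gradΦ x z + bregmanDiv Φ gradΦ z y + ⟪gradΦ z - gradΦ y, x - z⟫ := by
  have hsplit : x - y = (x - z) + (z - y) := by abel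
  simp only [bregmanDiv, hsplit, inner_add_right, inner_sub_left]
  ring

theorem hasFDerivAt_bregmanDiv_left {Φ : E → ℝ} {gradΦ : E → E} {a : E}
    (hΦ : HasFDerivAt Φ (innerSL ℝ (gradΦ a)) a) (q : E) :
    HasFDerivAt (fun p => bregmanDiv Φ gradΦ p q) (innerSL ℝ (gradΦ a - gradΦ q)) a := by
  have hlin : HasFDerivAt (fun p => ⟪gradΦ q, p - q⟫) (innerSL ℝ (gradΦ q)) a := by
    simpa only [innerSL_apply_apply, inner_sub_right] using
      ((innerSL ℝ (gradΦ q)).hasFDerivAt (x := a)).sub_const ⟪gradΦ q, q⟫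
  rw [map_sub]
  exact (hΦ.sub_const (Φ q)).sub hlin

end Bregman

theorem IsMinOn.hasFDerivWithinAt_nonneg_of_convex {E : Type*} [NormedAddCommGroup E]
    [NormedSpace ℝ E] {f : E → ℝ} {f' : E →L[ℝ] ℝ} {K : Set E} {a x : E}
    (hmin : IsMinOn f K a) (hK : Convex ℝ K) (ha : a ∈ K) (hf : HasFDerivWithinAt f f' K a)
    (hx : x ∈ K) : 0 ≤ f' (x - a) :=
  hmin.localize.hasFDerivWithinAt_nonneg hf
    (sub_mem_posTangentConeAt_of_segment_subset (hK.segment_subset ha hx))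

theorem stmt_11_general {E : Type*} [NormedAddCommGroup E] [InnerProductSpace ℝ E]
    (C : Set E)
    (Φ : E → ℝ) (gradΦ : E → E)
    (hdiff : ∀ x ∈ C, HasFDerivAt Φ (innerSL ℝ (gradΦ x)) x)
    (D : E → E → ℝ) (hD : ∀ p q, D p q = Φ p - Φ q - ⟪gradΦ q, p - q⟫)
    (K : Set E) (hK : Convex ℝ K) (hKC : K ⊆ C)
    (y : E)
    (xstar : E) (hxstar : xstar ∈ K)
    (hmin : IsMinOn (fun x => D x y) K xstar) :
    ∀ x ∈ K, D x xstar + D xstar y ≤ D x y := by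
  intro x hx
  obtain rfl : D = bregmanDiv Φ gradΦ := funext₂ hD
  have hfirst_order : 0 ≤ ⟪gradΦ xstar - gradΦ y, x - xstar⟫ :=
    hmin.hasFDerivWithinAt_nonneg_of_convex hK hxstar
      (hasFDerivAt_bregmanDiv_left (hdiff xstar (hKC hxstar)) y).hasFDerivWithinAt hx
  rw [bregmanDiv_three_point Φ gradΦ x xstar y]
  linarith

/-- generalized Pythagorean inequality for Bregman projections:
if `x*` minimizes `x ↦ D_Φ(x, y)` over a convex set `K ⊆ C`, then for every
`x ∈ K`, `D_Φ(x, x*) + D_Φ(x*, y) ≤ D_Φ(x, y)`. -/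
theorem stmt_11 {E : Type*} [NormedAddCommGroup E] [InnerProductSpace ℝ E]
    (C : Set E) (hC : Convex ℝ C) (hCopen : IsOpen C)
    (Φ : E → ℝ) (gradΦ : E → E)
    (hconv : ConvexOn ℝ C Φ)
    (hdiff : ∀ x ∈ C, HasFDerivAt Φ (innerSL ℝ (gradΦ x)) x)
    (D : E → E → ℝ) (hD : ∀ p q, D p q = Φ p - Φ q - ⟪gradΦ q, p - q⟫)
    (K : Set E) (hK : Convex ℝ K) (hKC : K ⊆ C)
    (y : E) (hy : y ∈ C)
    (xstar : E) (hxstar : xstar ∈ K)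
    (hmin : IsMinOn (fun x => D x y) K xstar) :
    ∀ x ∈ K, D x xstar + D xstar y ≤ D x y :=
  stmt_11_general C Φ gradΦ hdiff D hD K hK hKC y xstar hxstar hmin
end

section
/- Let E be a real inner product space, S ⊆ E a convex set, ρ > 0, and Φ : E → ℝ differentiable on an open set containing S and ρ-strongly convex on S with respect to the norm (i.e., Φ − (ρ/2)·‖·‖² is convex on S). Let 1 ≤ β ≤ B, η > 0, L > 0, let p, q ∈ S, let g ∈ E with ‖g‖ ≤ L, and let y be a point in the domain of differentiability of Φ with ∇Φ(y) = ∇Φ(p) − η·β·g. Then (1/β)·( D_Φ(p, y) − D_Φ(q, y) ) ≤ η²·L²·B/(2ρ). -/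
open scoped RealInnerProductSpace

/-!
Since `∇Φ(y) = ∇Φ(p) - ηβ g`, the Bregman difference `D_Φ(p, y) - D_Φ(q, y)` equals
`Φ(p) - Φ(q) - ⟨∇Φ(p), p - q⟩ + ηβ ⟨g, p - q⟩`. Strong convexity bounds the first three terms
by `-(ρ/2) ‖p - q‖²`, and Young's inequality bounds `ηβ ⟨g, p - q⟩` by
`(ρ/2) ‖p - q‖² + (ηβL)² / (2ρ)`. Dividing by `β` leaves `η²L²β / (2ρ) ≤ η²L²B / (2ρ)`.
-/

theorem ConvexOn.hasFDerivAt_apply_sub_le {E : Type*} [NormedAddCommGroup E] [NormedSpace ℝ E]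
    {S : Set E} {f : E → ℝ} {f' : E →L[ℝ] ℝ} {x y : E}
    (hf : ConvexOn ℝ S f) (hx : x ∈ S) (hy : y ∈ S) (hd : HasFDerivAt f f' x) :
    f' (y - x) ≤ f y - f x := by
  let ℓ : ℝ →ᵃ[ℝ] E := AffineMap.lineMap x y
  have hline : ConvexOn ℝ (ℓ ⁻¹' S) (f ∘ ℓ) := hf.comp_affineMap ℓ
  have hderiv : HasDerivAt (f ∘ ℓ) (f' (y - x)) 0 := by
    refine HasFDerivAt.comp_hasDerivAt (0 : ℝ) ?_ AffineMap.hasDerivAt_lineMap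
    simpa [ℓ] using hd
  simpa [ℓ, slope_def_field] using
    hline.le_slope_of_hasDerivAt (by simpa [ℓ]) (by simpa [ℓ]) zero_lt_one hderiv

theorem StrongConvexOn.add_inner_add_le {E : Type*} [NormedAddCommGroup E]
    [InnerProductSpace ℝ E] {S : Set E} {ρ : ℝ} {Φ : E → ℝ} {v p q : E}
    (hΦ : StrongConvexOn S ρ Φ) (hp : p ∈ S) (hq : q ∈ S)
    (hd : HasFDerivAt Φ (innerSL ℝ v) p) :
    Φ p + ⟪v, q - p⟫ + ρ / 2 * ‖q - p‖ ^ 2 ≤ Φ q := by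
  have hgrad := (strongConvexOn_iff_convex.mp hΦ).hasFDerivAt_apply_sub_le hp hq
    (hd.sub ((hasStrictFDerivAt_norm_sq p).hasFDerivAt.const_mul (ρ / 2)))
  simp only [sub_apply, smul_apply, innerSL_apply_apply, smul_eq_mul, nsmul_eq_mul,
    Nat.cast_ofNat, inner_sub_right, real_inner_self_eq_norm_sq] at hgrad
  rw [norm_sub_sq_real, inner_sub_right, real_inner_comm p q]
  linarith

theorem real_inner_le_norm_sq_div_add {E : Type*} [NormedAddCommGroup E] [InnerProductSpace ℝ E]
    {ρ : ℝ} (hρ : 0 < ρ) (x y : E) :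
    ⟪x, y⟫ ≤ ‖x‖ ^ 2 / (2 * ρ) + ρ / 2 * ‖y‖ ^ 2 := by
  have hsq : 0 ≤ ‖x - ρ • y‖ ^ 2 := sq_nonneg _
  rw [norm_sub_sq_real, real_inner_smul_right, norm_smul, Real.norm_of_nonneg hρ.le] at hsq
  rw [div_add' _ _ _ (by positivity), le_div_iff₀ (by positivity)]
  nlinarith

theorem stmt_13_general {E : Type*} [NormedAddCommGroup E] [InnerProductSpace ℝ E]
    (S U : Set E) (hSU : S ⊆ U)
    (ρ : ℝ) (hρ : 0 < ρ)
    (Φ : E → ℝ) (gradΦ : E → E)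
    (hdiff : ∀ x ∈ U, HasFDerivAt Φ (innerSL ℝ (gradΦ x)) x)
    (hstrong : ConvexOn ℝ S (fun x => Φ x - ρ / 2 * ‖x‖ ^ 2))
    (D : E → E → ℝ) (hD : ∀ p q, D p q = Φ p - Φ q - ⟪gradΦ q, p - q⟫)
    (β B η L : ℝ) (hβ1 : 1 ≤ β) (hβB : β ≤ B)
    (p q : E) (hp : p ∈ S) (hq : q ∈ S)
    (g : E) (hg : ‖g‖ ≤ L)
    (y : E)
    (hupdate : gradΦ y = gradΦ p - (η * β) • g) :
    (1 / β) * (D p y - D q y) ≤ η ^ 2 * L ^ 2 * B / (2 * ρ) := by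
  have hβ : 0 < β := by linarith
  have hbregman : D p y - D q y = Φ p - Φ q + ⟪gradΦ p, q - p⟫ + ⟪(η * β) • g, p - q⟫ := by
    simp only [hD, hupdate, inner_sub_left, inner_sub_right]
    ring
  have hfirstOrder : Φ p + ⟪gradΦ p, q - p⟫ + ρ / 2 * ‖p - q‖ ^ 2 ≤ Φ q := by
    rw [norm_sub_rev]
    exact (strongConvexOn_iff_convex.mpr hstrong).add_inner_add_le hp hq (hdiff p (hSU hp))
  have hyoung := real_inner_le_norm_sq_div_add hρ ((η * β) • g) (p - q)
  have hgnorm : ‖(η * β) • g‖ ^ 2 / (2 * ρ) ≤ (η * β * L) ^ 2 / (2 * ρ) := by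
    rw [norm_smul, Real.norm_eq_abs, mul_pow, mul_pow (η * β), sq_abs]
    gcongr
  calc (1 / β) * (D p y - D q y) ≤ (1 / β) * ((η * β * L) ^ 2 / (2 * ρ)) := by
        gcongr
        linarith
    _ = η ^ 2 * L ^ 2 * β / (2 * ρ) := by field_simp
    _ ≤ η ^ 2 * L ^ 2 * B / (2 * ρ) := by gcongr

/-- per-step bound in the annealed mirror-descent proof.
If `Φ` is `ρ`-strongly convex on a convex set `S`, differentiable on an open
set `U ⊇ S`, `1 ≤ β ≤ B`, `‖g‖ ≤ L`, and `∇Φ(y) = ∇Φ(p) - (η·β)·g`, then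
`(1/β)·(D_Φ(p,y) - D_Φ(q,y)) ≤ η²·L²·B/(2ρ)` for `p, q ∈ S`. -/
theorem stmt_13 {E : Type*} [NormedAddCommGroup E] [InnerProductSpace ℝ E]
    (S U : Set E) (hS : Convex ℝ S) (hU : IsOpen U) (hSU : S ⊆ U)
    (ρ : ℝ) (hρ : 0 < ρ)
    (Φ : E → ℝ) (gradΦ : E → E)
    (hdiff : ∀ x ∈ U, HasFDerivAt Φ (innerSL ℝ (gradΦ x)) x)
    (hstrong : ConvexOn ℝ S (fun x => Φ x - ρ / 2 * ‖x‖ ^ 2))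
    (D : E → E → ℝ) (hD : ∀ p q, D p q = Φ p - Φ q - ⟪gradΦ q, p - q⟫)
    (β B η L : ℝ) (hβ1 : 1 ≤ β) (hβB : β ≤ B) (hη : 0 < η) (hL : 0 < L)
    (p q : E) (hp : p ∈ S) (hq : q ∈ S)
    (g : E) (hg : ‖g‖ ≤ L)
    (y : E) (hy : y ∈ U)
    (hupdate : gradΦ y = gradΦ p - (η * β) • g) :
    (1 / β) * (D p y - D q y) ≤ η ^ 2 * L ^ 2 * B / (2 * ρ) :=
  stmt_13_general S U hSU ρ hρ Φ gradΦ hdiff hstrong D hD β B η L hβ1 hβB p q hp hq g hg y hupdate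
end
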